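/- arXiv:0707.1475 — 3 statements merged into one kernel-verified Lean document; each statement's English description precedes it below -/
import Mathlib

section
/- Let E_{ab} and B_{ab} be symmetric trace-free real 3×3 matrices and let W, 𝒫_a, t_{ab}, Q_{cdb}, t_{abcd} be the corresponding superenergy quantities. Then: (i) t_{ab} is symmetric, Q_{abc} is totally symmetric (Q_{(abc)} = Q_{abc}), and t_{abcd} is totally symmetric (t_{(abcd)} = t_{abcd}); (ii) t^a{}_a = W ≥ 0, Q^a{}_{ab} = 𝒫_b, and t^a{}_{abc} = t_{bc}. -/
noncomputable section

/-- The Euclidean metric `δ_{ab}` on `ℝ³`. -/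
def h3 : Fin 3 → Fin 3 → ℝ := fun a b => if a = b then 1 else 0

/-- The 3-dimensional Levi-Civita symbol with `ε₁₂₃ = 1`. -/
def eps3 (a b c : Fin 3) : ℝ :=
  ((((b.val : ℤ) - a.val).sign * ((c.val : ℤ) - a.val).sign *
    ((c.val : ℤ) - b.val).sign : ℤ) : ℝ)

/-- A 3×3 array. -/
abbrev Mat3 := Fin 3 → Fin 3 → ℝ

/-- Superenergy density `W = E_{ab} E^{ab} + B_{ab} B^{ab}`. -/
def Wd (E B : Mat3) : ℝ := ∑ a, ∑ b, (E a b * E a b + B a b * B a b)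

/-- Super-Poynting vector `𝒫_a = 2 B_p{}^l E_{ql} ε_a{}^{pq}`. -/
def Pd (E B : Mat3) (a : Fin 3) : ℝ := 2 * ∑ p, ∑ q, ∑ l, B p l * E q l * eps3 a p q

/-- `t_{ab} = W h_{ab} − 2 (B_a{}^c B_{bc} + E_a{}^c E_{bc})`. -/
def td (E B : Mat3) (a b : Fin 3) : ℝ :=
  Wd E B * h3 a b - 2 * ∑ c, (B a c * B b c + E a c * E b c)

/-- `Q_{cdb} = h_{cd} 𝒫_b − 2 (B_{da} E_{cf} + B_{ca} E_{df}) ε_b{}^{af}`. -/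
def Qd (E B : Mat3) (c d b : Fin 3) : ℝ :=
  h3 c d * Pd E B b - 2 * ∑ a, ∑ f, (B d a * E c f + B c a * E d f) * eps3 b a f

/-- The fully spatial part `t_{abcd}` of the Bel-Robinson tensor. -/
def t4d (E B : Mat3) (a b c d : Fin 3) : ℝ :=
  4 * (B a b * B c d + E a b * E c d)
  - h3 c d * td E B a b
  + (h3 b d * td E B c a + h3 b c * td E B d a)
  + (h3 a d * td E B c b + h3 a c * td E B d b)
  - h3 a b * td E B c d
  + Wd E B * (h3 a b * h3 c d - (h3 a c * h3 d b + h3 a d * h3 c b))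

/-- Total symmetrization of a rank-3 tensor on `ℝ³`. -/
def sym3 (T : Fin 3 → Fin 3 → Fin 3 → ℝ) (a b c : Fin 3) : ℝ :=
  (1/6) * ∑ σ : Equiv.Perm (Fin 3),
    T (![a, b, c] (σ 0)) (![a, b, c] (σ 1)) (![a, b, c] (σ 2))

/-- Total symmetrization of a rank-4 tensor on `ℝ³`. -/
def sym43 (T : Fin 3 → Fin 3 → Fin 3 → Fin 3 → ℝ) (a b c d : Fin 3) : ℝ :=
  (1/24) * ∑ σ : Equiv.Perm (Fin 4),
    T (![a, b, c, d] (σ 0)) (![a, b, c, d] (σ 1)) (![a, b, c, d] (σ 2)) (![a, b, c, d] (σ 3))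

/-! Every permutation of `Fin (n + 1)` is a product of adjacent transpositions, so total symmetry
reduces to symmetry under adjacent swaps of indices. For `Q` and `t_{abcd}` all but one such swap
is manifest in the defining formula; the remaining one is a genuinely three-dimensional identity
for symmetric trace-free matrices, which is checked componentwise after eliminating the entries
below the diagonal and the last diagonal entry. Since `t_{abcd}` is a sum of a part quadratic in
`E` and one quadratic in `B`, that check involves one matrix at a time. -/

open Equiv Finset

theorem comp_perm_eq_of_comp_swap_eq {n : ℕ} {α β : Type*} (f : (Fin (n + 1) → α) → β)
    (h : ∀ (i : Fin n) (v : Fin (n + 1) → α), f (v ∘ swap i.castSucc i.succ) = f v)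
    (σ : Perm (Fin (n + 1))) (v : Fin (n + 1) → α) : f (v ∘ σ) = f v := by
  have hσ : σ ∈ Submonoid.closure (Set.range fun i : Fin n ↦ swap i.castSucc i.succ) := by
    rw [Perm.mclosure_swap_castSucc_succ]; exact Submonoid.mem_top σ
  induction hσ using Submonoid.closure_induction generalizing v with
  | mem _ hτ => obtain ⟨i, rfl⟩ := hτ; exact h i v
  | one => rfl
  | mul σ τ _ _ hσ hτ => exact (hτ (v ∘ σ)).trans (hσ v)

theorem sym3_eq_self_of_symm (T : Fin 3 → Fin 3 → Fin 3 → ℝ)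
    (h01 : ∀ a b c, T a b c = T b a c) (h12 : ∀ a b c, T a b c = T a c b) (a b c : Fin 3) :
    sym3 T a b c = T a b c := by
  have key := comp_perm_eq_of_comp_swap_eq (fun v : Fin 3 → Fin 3 ↦ T (v 0) (v 1) (v 2)) (by
    intro i v
    fin_cases i <;> simp [swap_apply_of_ne_of_ne] <;> first | exact h01 .. | exact h12 ..)
  simp only [sym3, Function.comp_def] at key ⊢
  simp [key, Fintype.card_perm, Nat.factorial]

theorem sym43_eq_self_of_symm (T : Fin 3 → Fin 3 → Fin 3 → Fin 3 → ℝ)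
    (h01 : ∀ a b c d, T a b c d = T b a c d) (h12 : ∀ a b c d, T a b c d = T a c b d)
    (h23 : ∀ a b c d, T a b c d = T a b d c) (a b c d : Fin 3) :
    sym43 T a b c d = T a b c d := by
  have key := comp_perm_eq_of_comp_swap_eq
    (fun v : Fin 4 → Fin 3 ↦ T (v 0) (v 1) (v 2) (v 3)) (by
      intro i v
      fin_cases i <;> simp [swap_apply_of_ne_of_ne] <;>
        first | exact h01 .. | exact h12 .. | exact h23 ..)
  simp only [sym43, Function.comp_def] at key ⊢
  simp [key, Fintype.card_perm, Nat.factorial]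

theorem h3_comm (a b : Fin 3) : h3 a b = h3 b a := by
  simp only [h3, eq_comm]

theorem sum_h3_mul (f : Fin 3 → ℝ) (b : Fin 3) : ∑ a, h3 a b * f a = f b := by
  simp [h3]

theorem sum_h3_self : ∑ a, h3 a a = 3 := by
  simp [h3]

theorem entries_of_symm_traceless {S : Mat3} (hsym : ∀ a b, S a b = S b a)
    (htr : ∑ a, S a a = 0) :
    S 1 0 = S 0 1 ∧ S 2 0 = S 0 2 ∧ S 2 1 = S 1 2 ∧ S 2 2 = -S 0 0 - S 1 1 := by
  refine ⟨hsym .., hsym .., hsym .., ?_⟩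
  rw [Fin.sum_univ_three] at htr
  linarith

theorem Wd_nonneg (E B : Mat3) : 0 ≤ Wd E B :=
  sum_nonneg fun _ _ ↦ sum_nonneg fun _ _ ↦ add_nonneg (mul_self_nonneg _) (mul_self_nonneg _)

theorem td_comm (E B : Mat3) (a b : Fin 3) : td E B a b = td E B b a := by
  simp only [td, h3_comm a, mul_comm (B a _), mul_comm (E a _)]

theorem sum_td_diag (E B : Mat3) : ∑ a, td E B a a = Wd E B := by
  simp only [td, Wd, sum_sub_distrib, ← mul_sum, sum_h3_self, sum_add_distrib]
  ring

theorem Qd_symm_01 (E B : Mat3) (c d b : Fin 3) : Qd E B c d b = Qd E B d c b := by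
  simp only [Qd, h3_comm c, add_comm (B d _ * E c _)]

theorem Qd_symm_12 {E B : Mat3}
    (hEsym : ∀ a b, E a b = E b a) (hEtr : ∑ a, E a a = 0)
    (hBsym : ∀ a b, B a b = B b a) (hBtr : ∑ a, B a a = 0) (c d b : Fin 3) :
    Qd E B c d b = Qd E B c b d := by
  obtain ⟨e10, e20, e21, e22⟩ := entries_of_symm_traceless hEsym hEtr
  obtain ⟨b10, b20, b21, b22⟩ := entries_of_symm_traceless hBsym hBtr
  fin_cases c <;> fin_cases d <;> fin_cases b <;>
    simp [Qd, Pd, Fin.sum_univ_three, eps3, h3, e10, e20, e21, e22, b10, b20, b21, b22] <;> ring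

theorem sum_Qd_diag {E B : Mat3} (hEsym : ∀ a b, E a b = E b a) (hBsym : ∀ a b, B a b = B b a)
    (b : Fin 3) : ∑ a, Qd E B a a b = Pd E B b := by
  simp only [Qd, sum_sub_distrib, ← sum_mul, sum_h3_self]
  simp only [Pd, Fin.sum_univ_three, hEsym 1 0, hEsym 2 0, hEsym 2 1, hBsym 1 0, hBsym 2 0,
    hBsym 2 1]
  ring

theorem t4d_eq_add (E B : Mat3) (a b c d : Fin 3) :
    t4d E B a b c d = t4d E 0 a b c d + t4d B 0 a b c d := by
  simp only [t4d, td, Wd, Pi.zero_apply, sum_add_distrib]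
  ring

theorem t4d_symm_01 {E B : Mat3} (hEsym : ∀ a b, E a b = E b a)
    (hBsym : ∀ a b, B a b = B b a) (a b c d : Fin 3) : t4d E B a b c d = t4d E B b a c d := by
  rw [t4d, t4d, hEsym b a, hBsym b a, td_comm E B b a, h3_comm b a, h3_comm d a, h3_comm c a,
    h3_comm c b, h3_comm d b]
  ring

theorem t4d_symm_23 {E B : Mat3} (hEsym : ∀ a b, E a b = E b a)
    (hBsym : ∀ a b, B a b = B b a) (a b c d : Fin 3) : t4d E B a b c d = t4d E B a b d c := by
  rw [t4d, t4d, hEsym d c, hBsym d c, td_comm E B d c, h3_comm d c]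
  ring

theorem t4d_zero_symm_12 {S : Mat3} (hsym : ∀ a b, S a b = S b a)
    (htr : ∑ a, S a a = 0) (a b c d : Fin 3) :
    t4d S 0 a b c d = t4d S 0 a c b d := by
  obtain ⟨s10, s20, s21, s22⟩ := entries_of_symm_traceless hsym htr
  fin_cases a <;> fin_cases b <;> fin_cases c <;> fin_cases d <;>
    simp [t4d, td, Wd, Fin.sum_univ_three, h3, s10, s20, s21, s22] <;> ring

theorem t4d_symm_12 {E B : Mat3}
    (hEsym : ∀ a b, E a b = E b a) (hEtr : ∑ a, E a a = 0)
    (hBsym : ∀ a b, B a b = B b a) (hBtr : ∑ a, B a a = 0) (a b c d : Fin 3) :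
    t4d E B a b c d = t4d E B a c b d := by
  rw [t4d_eq_add, t4d_eq_add E B a c b d, t4d_zero_symm_12 hEsym hEtr,
    t4d_zero_symm_12 hBsym hBtr]

theorem sum_t4d_diag {E B : Mat3} (hEtr : ∑ a, E a a = 0) (hBtr : ∑ a, B a a = 0)
    (b c : Fin 3) : ∑ a, t4d E B a a b c = td E B b c := by
  simp only [t4d, sum_add_distrib, sum_sub_distrib, ← sum_mul, ← mul_sum, sum_h3_mul,
    sum_h3_self, hEtr, hBtr, sum_td_diag]
  rw [td_comm E B c b, h3_comm c b]
  ring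

/-- Basic algebraic properties of the spatial parts of the Bel-Robinson tensor:
symmetries, traces and nonnegativity of the superenergy density. -/
theorem bel_robinson_parts_algebraic_properties
    (E B : Mat3)
    (hEsym : ∀ a b, E a b = E b a) (hEtr : (∑ a, E a a) = 0)
    (hBsym : ∀ a b, B a b = B b a) (hBtr : (∑ a, B a a) = 0) :
    (∀ a b, td E B a b = td E B b a) ∧
    (∀ a b c, sym3 (Qd E B) a b c = Qd E B a b c) ∧
    (∀ a b c d, sym43 (t4d E B) a b c d = t4d E B a b c d) ∧
    ((∑ a, td E B a a) = Wd E B) ∧ 0 ≤ Wd E B ∧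
    (∀ b, (∑ a, Qd E B a a b) = Pd E B b) ∧
    (∀ b c, (∑ a, t4d E B a a b c) = td E B b c) := by
  refine ⟨td_comm E B, fun a b c ↦ ?_, fun a b c d ↦ ?_, sum_td_diag E B, Wd_nonneg E B,
    sum_Qd_diag hEsym hBsym, sum_t4d_diag hEtr hBtr⟩
  · exact sym3_eq_self_of_symm _ (Qd_symm_01 E B) (Qd_symm_12 hEsym hEtr hBsym hBtr) a b c
  · exact sym43_eq_self_of_symm _ (t4d_symm_01 hEsym hBsym) (t4d_symm_12 hEsym hEtr hBsym hBtr)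
      (t4d_symm_23 hEsym hBsym) a b c d
end
end

section
/- Let E_{ab} and B_{ab} be symmetric trace-free real 3×3 matrices, 𝒫_a = 2 B_p{}^l E_{ql} ε_a{}^{pq}, and Q_{cdb} = h_{cd} 𝒫_b − 2 (B_{da} E_{cf} + B_{ca} E_{df}) ε_b{}^{af}. Then Q_{abc} = 0 if and only if E_{ab} and B_{ab} are linearly dependent over ℝ, i.e. there exist real numbers α, β, not both zero, with α E_{ab} + β B_{ab} = 0. -/
noncomputable section

/-!
Contracting with `ε` turns `Q_{cd·}` into the antisymmetric part in `(a, f)` of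
`B_{da} E_{cf} + B_{ca} E_{df}`, i.e. into `b_d ∧ e_c + b_c ∧ e_d` for the rows `e_c`, `b_c` of
`E`, `B`; for symmetric `E`, `B` the trace `Q_{cc·}` is `𝒫`, so `Q = 0` forces `𝒫 = 0` and hence
`b_d ∧ e_c + b_c ∧ e_d = 0` for all `c, d`. For `c = d` this makes every `b_c` a multiple of `e_c`.
A nonzero symmetric trace-free `E` has two independent rows (its principal `2 × 2` minors sum to
`-|E|² / 2`), and the mixed conditions then force one common factor: `B = t E`.
-/

open Finset

def wedge {n K : Type*} [Mul K] [Sub K] (u v : n → K) (a f : n) : K := u a * v f - u f * v a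

section Wedge

variable {ι n K : Type*} [Field K]

lemma ne_zero_of_wedge_ne_zero {u v : n → K} (h : wedge u v ≠ 0) : u ≠ 0 ∧ v ≠ 0 := by
  constructor <;> rintro rfl <;> exact h (funext₂ fun _ _ => by simp [wedge])

lemma exists_eq_smul_of_wedge_eq_zero {u v : n → K} (hu : u ≠ 0) (h : wedge v u = 0) :
    ∃ t : K, v = t • u := by
  obtain ⟨k, hk⟩ := Function.ne_iff.mp hu
  refine ⟨v k / u k, funext fun a => ?_⟩
  have := congrFun₂ h a k
  simp only [wedge, Pi.zero_apply, Pi.smul_apply, smul_eq_mul] at this hk ⊢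
  field_simp
  linear_combination this

lemma eq_zero_of_wedge_eq_zero {x u v : n → K} (hu : wedge x u = 0) (hv : wedge x v = 0)
    (huv : wedge u v ≠ 0) : x = 0 := by
  obtain ⟨a, f, hm⟩ : ∃ a f, wedge u v a f ≠ 0 := by
    by_contra! h
    exact huv (funext₂ h)
  funext t
  have key : x t * wedge u v a f = 0 := by
    have h1 := congrFun₂ hu t a
    have h2 := congrFun₂ hu t f
    have h3 := congrFun₂ hv a f
    simp only [wedge, Pi.zero_apply] at h1 h2 h3 ⊢
    linear_combination v f * h1 - v a * h2 + u t * h3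
  simpa [hm] using key

lemma exists_eq_smul_of_wedge_add_wedge_eq_zero [CharZero K] {e b : ι → n → K}
    (h : ∀ c d, wedge (b d) (e c) + wedge (b c) (e d) = 0) {i j : ι}
    (hij : wedge (e i) (e j) ≠ 0) : ∃ t : K, b = t • e := by
  have hrow (c : ι) (hc : e c ≠ 0) : ∃ t : K, b c = t • e c :=
    exists_eq_smul_of_wedge_eq_zero hc
      (funext₂ fun a f => add_self_eq_zero.mp (congrFun₂ (h c c) a f))
  obtain ⟨t, hi⟩ := hrow i (ne_zero_of_wedge_ne_zero hij).1
  obtain ⟨t', hj⟩ := hrow j (ne_zero_of_wedge_ne_zero hij).2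
  have htt' : t = t' := by
    have : (t - t') • wedge (e i) (e j) = 0 := funext₂ fun a f => by
      have := congrFun₂ (h i j) a f
      simp only [wedge, Pi.add_apply, Pi.zero_apply, Pi.smul_apply, smul_eq_mul, hi, hj] at this ⊢
      linear_combination this
    exact sub_eq_zero.mp ((smul_eq_zero.mp this).resolve_right hij)
  -- `b c - t • e c` is parallel to both `e i` and `e j`, which are not parallel.
  refine ⟨t, funext fun c => sub_eq_zero.mp (eq_zero_of_wedge_eq_zero ?_ ?_ hij)⟩
  · funext a f
    have := congrFun₂ (h c i) a f
    simp only [wedge, Pi.add_apply, Pi.sub_apply, Pi.zero_apply, Pi.smul_apply, smul_eq_mul,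
      hi] at this ⊢
    linear_combination this
  · funext a f
    have := congrFun₂ (h c j) a f
    simp only [wedge, Pi.add_apply, Pi.sub_apply, Pi.zero_apply, Pi.smul_apply, smul_eq_mul,
      hj, ← htt'] at this ⊢
    linear_combination this

lemma wedge_add_wedge_eq_zero_of_linearDependent {e b : ι → n → K} {α β : K}
    (hαβ : ¬(α = 0 ∧ β = 0)) (h : ∀ c a, α * e c a + β * b c a = 0) (c d : ι) :
    wedge (b d) (e c) + wedge (b c) (e d) = 0 := by
  funext a f
  simp only [wedge, Pi.add_apply, Pi.zero_apply]
  rcases not_and_or.mp hαβ with hα | hβ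
  · refine (mul_eq_zero.mp ?_).resolve_left hα
    linear_combination b d a * h c f + b c a * h d f - b d f * h c a - b c f * h d a
  · refine (mul_eq_zero.mp ?_).resolve_left hβ
    linear_combination e c f * h d a + e d f * h c a - e c a * h d f - e d a * h c f

lemma exists_wedge_ne_zero [Fintype n] [LinearOrder K] [IsStrictOrderedRing K] {E : n → n → K}
    (hsymm : ∀ a b, E a b = E b a) (htr : ∑ a, E a a = 0) (hE : E ≠ 0) :
    ∃ i j, wedge (E i) (E j) ≠ 0 := by
  by_contra! h
  have hsq : ∑ i, ∑ j, E i j * E i j = 0 :=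
    calc ∑ i, ∑ j, E i j * E i j
        = (∑ i, E i i) * (∑ j, E j j) - ∑ i, ∑ j, wedge (E i) (E j) i j := by
          simp only [wedge, sum_mul_sum, ← sum_sub_distrib]
          refine sum_congr rfl fun i _ => sum_congr rfl fun j _ => ?_
          rw [hsymm j i]
          ring
      _ = 0 := by simp [htr, h]
  rw [sum_eq_zero_iff_of_nonneg fun _ _ => sum_nonneg fun _ _ => mul_self_nonneg _] at hsq
  exact hE (funext₂ fun i j =>
    (sum_mul_self_eq_zero_iff _ _).mp (hsq i (mem_univ _)) j (mem_univ _))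

end Wedge

lemma Matrix.eq_zero_iff_forall_one_mul_trace_sub_two_mul_eq_zero {n K : Type*} [Fintype n]
    [DecidableEq n] [Field K] [CharZero K] (hn : (Fintype.card n : K) ≠ 2) {s : Matrix n n K} :
    s = 0 ↔ ∀ c d, (1 : Matrix n n K) c d * s.trace - 2 * s c d = 0 := by
  refine ⟨fun hs => by simp [hs], fun h => ?_⟩
  have htr : s.trace = 0 := by
    have : ((Fintype.card n : K) - 2) * s.trace = 0 :=
      calc ((Fintype.card n : K) - 2) * s.trace
          = ∑ c, ((1 : Matrix n n K) c c * s.trace - 2 * s c c) := by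
            simp [sum_sub_distrib, ← mul_sum, Matrix.trace, sub_mul]
        _ = 0 := sum_eq_zero fun c _ => h c c
    exact (mul_eq_zero.mp this).resolve_left (sub_ne_zero.mpr hn)
  funext c d
  simpa [htr] using h c d

lemma eq_zero_of_antisymm_of_apply_add_one_add_two {K : Type*} [Field K] [CharZero K]
    {X : Fin 3 → Fin 3 → K} (hX : ∀ a f, X f a = -X a f) (h : ∀ b, X (b + 1) (b + 2) = 0) :
    X = 0 := by
  have h0 := h 0
  have h1 := h 1
  have h2 := h 2
  simp only [Fin.reduceAdd] at h0 h1 h2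
  funext a f
  fin_cases a <;> fin_cases f <;>
    simp [h0, h1, h2, hX 0 1, hX 1 2, hX 2 0, self_eq_neg.mp (hX _ _)]

lemma sum_sum_mul_eps3 (X : Fin 3 → Fin 3 → ℝ) (b : Fin 3) :
    ∑ a, ∑ f, X a f * eps3 b a f = X (b + 1) (b + 2) - X (b + 2) (b + 1) := by
  fin_cases b <;> simp [Fin.sum_univ_three, eps3, show Int.sign 2 = 1 from rfl] <;> ring

lemma Pd_eq {E B : Mat3} (hE : ∀ a b, E a b = E b a) (hB : ∀ a b, B a b = B b a) (b : Fin 3) :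
    Pd E B b = 2 * ∑ l, wedge (B l) (E l) (b + 1) (b + 2) :=
  calc Pd E B b = 2 * ∑ p, ∑ l, ∑ q, B l p * E l q * eps3 b p q := by
        rw [Pd]
        congr 1
        refine sum_congr rfl fun p _ => ?_
        rw [sum_comm]
        exact sum_congr rfl fun l _ => sum_congr rfl fun q _ => by rw [hB, hE]
    _ = 2 * ∑ l, ∑ p, ∑ q, B l p * E l q * eps3 b p q := by rw [sum_comm]
    _ = 2 * ∑ l, wedge (B l) (E l) (b + 1) (b + 2) := by
        simp only [sum_sum_mul_eps3 (fun p q => B _ p * E _ q), wedge]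

lemma Qd_eq (E B : Mat3) (c d b : Fin 3) :
    Qd E B c d b =
      h3 c d * Pd E B b - 2 * (wedge (B d) (E c) + wedge (B c) (E d)) (b + 1) (b + 2) := by
  rw [Qd, sum_sum_mul_eps3 (fun a f => B d a * E c f + B c a * E d f)]
  simp only [wedge, Pi.add_apply]
  ring

lemma Qd_eq_zero_iff {E B : Mat3} (hE : ∀ a b, E a b = E b a) (hB : ∀ a b, B a b = B b a) :
    (∀ c d b, Qd E B c d b = 0) ↔ ∀ c d, wedge (B d) (E c) + wedge (B c) (E d) = 0 := by
  set D : Fin 3 → Fin 3 → Mat3 := fun c d => wedge (B d) (E c) + wedge (B c) (E d)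
  have hQ (c d b : Fin 3) : Qd E B c d b =
      (1 : Matrix (Fin 3) (Fin 3) ℝ) c d * (Matrix.of fun c d => D c d (b + 1) (b + 2)).trace
        - 2 * D c d (b + 1) (b + 2) := by
    rw [Qd_eq, Pd_eq hE hB]
    simp [Matrix.trace, Matrix.one_apply, h3, D, mul_sum, two_mul]
  constructor
  · intro h c d
    refine eq_zero_of_antisymm_of_apply_add_one_add_two (fun a f => ?_) fun b => ?_
    · simp only [wedge, Pi.add_apply]
      ring
    · have := (Matrix.eq_zero_iff_forall_one_mul_trace_sub_two_mul_eq_zero (by norm_num)).mpr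
        fun c d => (hQ c d b) ▸ h c d b
      exact congrFun₂ this c d
  · intro h c d b
    simp [hQ, D, h, Matrix.trace]

theorem Q_vanishes_iff_linearly_dependent_general
    (E B : Mat3)
    (hEsym : ∀ a b, E a b = E b a) (hEtr : (∑ a, E a a) = 0)
    (hBsym : ∀ a b, B a b = B b a) :
    (∀ a b c, Qd E B a b c = 0) ↔
      ∃ α β : ℝ, ¬(α = 0 ∧ β = 0) ∧ ∀ a b, α * E a b + β * B a b = 0 := by
  rw [Qd_eq_zero_iff hEsym hBsym]
  constructor
  · intro h
    by_cases hE : E = 0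
    · exact ⟨1, 0, by norm_num, fun a b => by simp [hE]⟩
    obtain ⟨i, j, hij⟩ := exists_wedge_ne_zero hEsym hEtr hE
    obtain ⟨t, rfl⟩ := exists_eq_smul_of_wedge_add_wedge_eq_zero h hij
    exact ⟨t, -1, by norm_num, fun a b => by simp⟩
  · rintro ⟨α, β, hαβ, h⟩
    exact wedge_add_wedge_eq_zero_of_linearDependent hαβ h

/-- `Q_{abc}` vanishes if and only if `E_{ab}` and `B_{ab}` are linearly dependent. -/
theorem Q_vanishes_iff_linearly_dependent
    (E B : Mat3)
    (hEsym : ∀ a b, E a b = E b a) (hEtr : (∑ a, E a a) = 0)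
    (hBsym : ∀ a b, B a b = B b a) (hBtr : (∑ a, B a a) = 0) :
    (∀ a b c, Qd E B a b c = 0) ↔
      ∃ α β : ℝ, ¬(α = 0 ∧ β = 0) ∧ ∀ a b, α * E a b + β * B a b = 0 :=
  Q_vanishes_iff_linearly_dependent_general E B hEsym hEtr hBsym
end
end

section
/- Let e, b be real numbers, not both zero, and let E_{ab} and B_{ab} be the Petrov type N canonical matrices E = [[0, 0, 0], [0, e, −b], [0, −b, −e]] and B = [[0, 0, 0], [0, b, e], [0, e, −b]]. Let W, 𝒫_a, t_{ab}, Q_{cdb}, t_{abcd} be the corresponding superenergy quantities. Then 𝒫_a ≠ 0, 𝒫_a 𝒫^a = W², t_{ab} = 𝒫_a 𝒫_b / W, Q_{abc} = 𝒫_a 𝒫_b 𝒫_c / W², and t_{abcd} = 𝒫_a 𝒫_b 𝒫_c 𝒫_d / W³. -/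
noncomputable section

/-!
For the type N canonical form, the super-Poynting vector is `𝒫 = W k` with `k = -e₁` a unit
vector, and `t_{ab}`, `Q_{abc}`, `t_{abcd}` are `W` times the second, third and fourth tensor
powers of `k` (a direct computation in components). Every claimed identity then reduces to
`|k| = 1` and `W = 4 (e² + b²) ≠ 0`.
-/

def typeNElectric (e b : ℝ) : Mat3 := fun x y => !![0, 0, 0; 0, e, -b; 0, -b, -e] x y

def typeNMagnetic (e b : ℝ) : Mat3 := fun x y => !![0, 0, 0; 0, b, e; 0, e, -b] x y

def principalDir : Fin 3 → ℝ := fun a => -h3 0 a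

theorem sum_principalDir_mul_self : ∑ a, principalDir a * principalDir a = 1 := by
  simp [principalDir, h3]

section TypeN

variable (e b : ℝ)

theorem Wd_typeN : Wd (typeNElectric e b) (typeNMagnetic e b) = 4 * (e ^ 2 + b ^ 2) := by
  simp [Wd, typeNElectric, typeNMagnetic, Fin.sum_univ_succ]
  ring

theorem Wd_typeN_ne_zero (h : ¬(e = 0 ∧ b = 0)) :
    Wd (typeNElectric e b) (typeNMagnetic e b) ≠ 0 := by
  rw [Wd_typeN]
  rcases not_and_or.mp h with h | h <;> positivity

theorem Pd_typeN (a : Fin 3) :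
    Pd (typeNElectric e b) (typeNMagnetic e b) a =
      Wd (typeNElectric e b) (typeNMagnetic e b) * principalDir a := by
  rw [Wd_typeN]
  fin_cases a <;>
    simp [Pd, eps3, h3, principalDir, typeNElectric, typeNMagnetic, Fin.sum_univ_succ]
  ring

theorem td_typeN (x y : Fin 3) :
    td (typeNElectric e b) (typeNMagnetic e b) x y =
      Wd (typeNElectric e b) (typeNMagnetic e b) * (principalDir x * principalDir y) := by
  simp only [td, Wd_typeN]
  fin_cases x <;> fin_cases y <;>
    simp [h3, principalDir, typeNElectric, typeNMagnetic, Fin.sum_univ_succ] <;> ring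

theorem Qd_typeN (x y z : Fin 3) :
    Qd (typeNElectric e b) (typeNMagnetic e b) x y z =
      Wd (typeNElectric e b) (typeNMagnetic e b) *
        (principalDir x * principalDir y * principalDir z) := by
  simp only [Qd, Pd_typeN, Wd_typeN]
  fin_cases x <;> fin_cases y <;> fin_cases z <;>
    simp [h3, eps3, principalDir, typeNElectric, typeNMagnetic, Fin.sum_univ_succ] <;> ring

theorem t4d_typeN (x y z w : Fin 3) :
    t4d (typeNElectric e b) (typeNMagnetic e b) x y z w =
      Wd (typeNElectric e b) (typeNMagnetic e b) *
        (principalDir x * principalDir y * principalDir z * principalDir w) := by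
  simp only [t4d, td_typeN, Wd_typeN]
  fin_cases x <;> fin_cases y <;> fin_cases z <;> fin_cases w <;>
    simp [h3, principalDir, typeNElectric, typeNMagnetic] <;> ring

end TypeN

/-- Canonical forms of the Bel-Robinson spatial parts for Petrov type N. -/
theorem petrov_type_N_canonical_superenergy
    (e b : ℝ) (hne : ¬(e = 0 ∧ b = 0))
    (E B : Mat3)
    (hE : E = fun x y => !![0, 0, 0; 0, e, -b; 0, -b, -e] x y)
    (hB : B = fun x y => !![0, 0, 0; 0, b, e; 0, e, -b] x y) :
    Pd E B ≠ 0 ∧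
    (∑ a, Pd E B a * Pd E B a) = (Wd E B) ^ 2 ∧
    (∀ x y, td E B x y = Pd E B x * Pd E B y / Wd E B) ∧
    (∀ x y z, Qd E B x y z = Pd E B x * Pd E B y * Pd E B z / (Wd E B) ^ 2) ∧
    (∀ x y z w, t4d E B x y z w =
      Pd E B x * Pd E B y * Pd E B z * Pd E B w / (Wd E B) ^ 3) := by
  rw [show E = typeNElectric e b from hE, show B = typeNMagnetic e b from hB]
  have hW := Wd_typeN_ne_zero e b hne
  refine ⟨fun hP => ?_, ?_, fun x y => ?_, fun x y z => ?_, fun x y z w => ?_⟩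
  · simpa [Pd_typeN, principalDir, h3, hW] using congrFun hP 0
  · simp_rw [Pd_typeN, mul_mul_mul_comm _ (principalDir _), ← Finset.mul_sum,
      sum_principalDir_mul_self]
    ring
  · rw [td_typeN, Pd_typeN, Pd_typeN]
    field_simp
  · rw [Qd_typeN, Pd_typeN, Pd_typeN, Pd_typeN]
    field_simp
  · rw [t4d_typeN, Pd_typeN, Pd_typeN, Pd_typeN, Pd_typeN]
    field_simp
end
end
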